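/- arXiv:2109.05363 — 5 statements merged into one kernel-verified Lean document; each statement's English description precedes it below -/
import Mathlib

section
/- Let I be nonempty and consider, in the power structure M^I, a system consisting of relation constraints R₁,...,R_l on terms (required to hold) and negated relation constraints ¬R_{l+1},...,¬R_k on terms (required to fail). If some assignment s : {1,...,n} → M^I satisfies all these constraints in M^I, then there exists a function r : {l+1,...,k} → I such that: (1) for every i ∈ I the assignment j ↦ s_j(i) satisfies all positive constraints R₁,...,R_l in M, and (2) for each e ∈ {l+1,...,k}, the assignment j ↦ s_j(r(e)) falsifies R_e in M; in particular, each of the formulas φ_d (positive constraints plus the negative constraints in the fiber r⁻¹(r(e))) is satisfiable in M, and the induced partition r⁻¹(I) of {l+1,...,k} has at most min(|I|, k−l) blocks. -/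
/-- Let `I` be nonempty (and finite, so that `|I|` makes sense) and consider, in the
power structure `M^I`, a system of constraints: positive atomic constraints
`P₁,…,P_l` (each an atomic relation applied to terms, viewed as a predicate on
assignments in `Mⁿ`, holding in the power iff it holds at every index) and negated
constraints `¬Q_{l+1},…,¬Q_k` (each failing in the power iff failing at some index).
If `s : Fin n → M^I` satisfies the system in `M^I`, then there is `r` mapping each
negated constraint to an index where it fails, such that: (1) at every index the
componentwise assignment satisfies all positive constraints; (2) at `r e` the
constraint `Q e` fails; (3) each formula `φ_d` (positives plus the negatives in the
fiber of `r` through `e`) is satisfiable in `M`; and (4) the induced partition into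
fibers has at most `min |I| (k - l)` blocks. -/
theorem power_solution_induces_partition {M I : Type*} [Fintype I] [DecidableEq I]
    [Nonempty I] {n l k' : ℕ}
    (P : Fin l → (Fin n → M) → Prop) (Q : Fin k' → (Fin n → M) → Prop)
    (s : Fin n → (I → M))
    (hP : ∀ j : Fin l, ∀ i : I, P j (fun v => s v i))
    (hQ : ∀ e : Fin k', ¬ ∀ i : I, Q e (fun v => s v i)) :
    ∃ r : Fin k' → I,
      (∀ i : I, ∀ j : Fin l, P j (fun v => s v i)) ∧
      (∀ e : Fin k', ¬ Q e (fun v => s v (r e))) ∧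
      (∀ e : Fin k', ∃ x : Fin n → M,
        (∀ j : Fin l, P j x) ∧ ∀ e' : Fin k', r e' = r e → ¬ Q e' x) ∧
      (Finset.image r Finset.univ).card ≤ min (Fintype.card I) k' := by
  choose r hr using fun e => not_forall.mp (hQ e)
  refine ⟨r, fun i j => hP j i, hr, fun e => ⟨fun v => s v (r e), fun j => hP j _,
    fun e' h => h ▸ hr e'⟩, le_min ?_ ?_⟩
  · exact (Finset.card_le_card (Finset.subset_univ _)).trans (le_of_eq (Finset.card_univ))
  · simpa using Finset.card_image_le.trans (le_of_eq (by simp))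
end

section
/- Let I be nonempty, let φ₀ be a conjunction of positive relation constraints R₁,...,R_l, let P = {p₁,...,p_t} be a partition of a finite set {l+1,...,k} of indices of negated constraints with t ≤ |I|, and for each d ∈ {1,...,t} let φ_d be the conjunction of R₁,...,R_l together with ¬R_e for e ∈ p_d. If each of φ₀, φ₁,...,φ_t is satisfiable in M (with solutions x_{·0}, x_{·1},...,x_{·t} ∈ Mⁿ), then the conjunction of R₁,...,R_l and ¬R_{l+1},...,¬R_k is satisfiable in the power structure M^I: choosing distinct indices i₁,...,i_t ∈ I, the functions s_j ∈ M^I given by s_j(i_d) = x_{j,d} and s_j(i) = x_{j,0} for i ∉ {i₁,...,i_t} form a satisfying assignment. -/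
/-- Let `I` be nonempty, `φ₀` the conjunction of positive constraints `P₁,…,P_l`
(predicates on assignments in `Mⁿ`; in the power structure they hold iff they hold
at every index), and let `part : {l+1,…,k} → {1,…,t}` describe a partition of the
negated constraints `Q_e` into `t` blocks, with `t ≤ |I|` (witnessed by an injection
`f : Fin t ↪ I`, which chooses distinct indices `i₁,…,i_t`). If `φ₀` has a solution
`x₀` in `M` and each `φ_d` (positives plus the negatives of block `d`) has a
solution `x_d` in `M`, then the assignment `s` placing `x_d` at index `f d` and `x₀`
everywhere else satisfies all positive constraints at every index and falsifies each
`Q_e` at index `f (part e)`; hence the whole system is satisfiable in `M^I`. -/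
theorem partition_solutions_glue {M I : Type*} [Nonempty I] {n l k' t : ℕ}
    (P : Fin l → (Fin n → M) → Prop) (Q : Fin k' → (Fin n → M) → Prop)
    (part : Fin k' → Fin t)
    (f : Fin t → I) (hf : Function.Injective f)
    (x0 : Fin n → M) (h0 : ∀ j : Fin l, P j x0)
    (xd : Fin t → Fin n → M)
    (hd : ∀ d : Fin t, (∀ j : Fin l, P j (xd d)) ∧
      ∀ e : Fin k', part e = d → ¬ Q e (xd d)) :
    ∃ s : Fin n → (I → M),
      (∀ v : Fin n, s v = Function.extend f (fun d => xd d v) (fun _ => x0 v)) ∧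
      (∀ j : Fin l, ∀ i : I, P j (fun v => s v i)) ∧
      (∀ e : Fin k', ¬ Q e (fun v => s v (f (part e)))) ∧
      (∀ e : Fin k', ∃ i : I, ¬ Q e (fun v => s v i)) := by
  refine ⟨fun v => Function.extend f (fun d => xd d v) (fun _ => x0 v),
    fun v => rfl, ?_, ?_, ?_⟩
  · intro j i
    by_cases h : ∃ d, f d = i
    · obtain ⟨d, rfl⟩ := h
      have : (fun v => Function.extend f (fun d => xd d v) (fun _ => x0 v) (f d)) = xd d := by
        funext v; exact hf.extend_apply _ _ _
      rw [this]; exact (hd d).1 j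
    · have : (fun v => Function.extend f (fun d => xd d v) (fun _ => x0 v) i) = x0 := by
        funext v; exact Function.extend_apply' _ _ _ h
      rw [this]; exact h0 j
  · intro e
    have : (fun v => Function.extend f (fun d => xd d v) (fun _ => x0 v) (f (part e))) = xd (part e) := by
      funext v; exact hf.extend_apply _ _ _
    rw [this]; exact (hd (part e)).2 e rfl
  · intro e
    refine ⟨f (part e), ?_⟩
    have : (fun v => Function.extend f (fun d => xd d v) (fun _ => x0 v) (f (part e))) = xd (part e) := by
      funext v; exact hf.extend_apply _ _ _
    rw [this]; exact (hd (part e)).2 e rfl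
end

section
/- A finite conjunction of positive and negated relation constraints is satisfiable in the power structure M^I (with I nonempty) if and only if there exists a partition P of the set of negated constraints with |P| ≤ |I| such that the conjunction of all positive constraints is satisfiable in M, and for each block p of P, the conjunction of all positive constraints together with the negated constraints in p is satisfiable in M. -/
/-- A finite conjunction of positive constraints `P₁,…,P_l` and negated constraints
`¬Q_{l+1},…,¬Q_k` (predicates on assignments in `Mⁿ` arising from atomic formulas
over terms; in the power structure a positive constraint holds iff it holds at every
index, a negated one iff it fails at some index) is satisfiable in the power
structure `M^I` (`I` nonempty) if and only if there is a partition of the negated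
constraints into `t` blocks with `t ≤ |I|` (witnessed by an injection `Fin t → I`)
such that the conjunction of the positive constraints is satisfiable in `M` and, for
each block `d`, the positive constraints together with the negated constraints of
block `d` are simultaneously satisfiable in `M`. -/
theorem power_sat_iff_partition_sat {M I : Type*} [Nonempty I] {n l k' : ℕ}
    (P : Fin l → (Fin n → M) → Prop) (Q : Fin k' → (Fin n → M) → Prop) :
    (∃ s : Fin n → (I → M),
        (∀ j : Fin l, ∀ i : I, P j (fun v => s v i)) ∧
        (∀ e : Fin k', ∃ i : I, ¬ Q e (fun v => s v i))) ↔
    (∃ (t : ℕ) (part : Fin k' → Fin t),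
        (∃ f : Fin t → I, Function.Injective f) ∧
        (∃ x : Fin n → M, ∀ j : Fin l, P j x) ∧
        (∀ d : Fin t, ∃ x : Fin n → M,
          (∀ j : Fin l, P j x) ∧ ∀ e : Fin k', part e = d → ¬ Q e x)) := by
  classical
  constructor
  · rintro ⟨s, hP, hQ⟩
    choose g hg using hQ
    set S : Finset I := Finset.image g Finset.univ with hS
    set t := S.card with ht
    have eqv : {x // x ∈ S} ≃ Fin t := S.equivFin
    refine ⟨t, fun e => eqv ⟨g e, Finset.mem_image_of_mem g (Finset.mem_univ e)⟩,
      ⟨fun d => (eqv.symm d).1, fun a b hab => by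
        have : eqv.symm a = eqv.symm b := Subtype.ext hab
        simpa using congrArg eqv this⟩,
      ⟨fun v => s v (Classical.arbitrary I), fun j => hP j _⟩, ?_⟩
    intro d
    refine ⟨fun v => s v (eqv.symm d).1, fun j => hP j _, ?_⟩
    intro e he
    have : (eqv.symm d).1 = g e := by
      rw [← he]; simp
    rw [this]; exact hg e
  · rintro ⟨t, part, ⟨f, hf⟩, ⟨x₀, hx₀⟩, hblk⟩
    choose x hxP hxQ using hblk
    refine ⟨fun v i => if h : ∃ d, f d = i then x (Classical.choose h) v else x₀ v,
      ?_, ?_⟩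
    · intro j i
      by_cases h : ∃ d, f d = i
      · simpa [h] using hxP (Classical.choose h) j
      · simpa [h] using hx₀ j
    · intro e
      refine ⟨f (part e), ?_⟩
      have h : ∃ d, f d = f (part e) := ⟨part e, rfl⟩
      have hd : Classical.choose h = part e := hf (Classical.choose_spec h)
      simpa [h, hd] using hxQ (part e) e rfl
end

section
/- Suppose a system of p+1 linear cardinality constraints Σ_{β ∈ B} c_{i,β} · l_β = k_i (i = 0,...,p), with coefficients c_{i,β} ∈ {0,1} and unknowns l_β ∈ ℕ indexed by a finite set B, has a solution. Then it has a solution in which the number of indices β with l_β > 0 is at most some bound N depending only on p (polynomially), namely the Eisenbrand–Shmonin bound: every element of the integer cone generated by a set X ⊆ {0,1}^{p+1} is an ℕ-linear combination of at most 2(p+1)·log₂(4(p+1)) elements of X. -/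
lemma ES_logb_le_self {x : ℝ} (hx : 1 ≤ x) : Real.logb 2 x ≤ x := by
  have h2 : (0.6931471803 : ℝ) < Real.log 2 := Real.log_two_gt_d9
  have hx2 : (0:ℝ) < x / 2 := by linarith
  have h1 : Real.log (x / 2) ≤ x / 2 - 1 := Real.log_le_sub_one_of_pos hx2
  have hlx : Real.log x = Real.log 2 + Real.log (x / 2) := by
    rw [← Real.log_mul (by norm_num) (ne_of_gt hx2)]
    ring_nf
  rw [Real.logb, div_le_iff₀ (by linarith)]
  nlinarith [Real.log_nonneg (by norm_num : (1:ℝ) ≤ 2)]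

lemma ES_real_bound {d t : ℝ} (hd : 1 ≤ d) (ht : 0 ≤ t)
    (h : t ≤ d * Real.logb 2 (t + 1)) :
    t ≤ 2 * d * Real.logb 2 (4 * d) := by
  by_contra hcon
  push_neg at hcon
  set L := Real.logb 2 (4 * d) with hLdef
  have hlog2 : (0.6931471803 : ℝ) < Real.log 2 := Real.log_two_gt_d9
  have h4eq : Real.logb 2 4 = 2 := by
    rw [show (4:ℝ) = 2 ^ (2:ℕ) by norm_num, Real.logb_pow, Real.logb_self_eq_one] <;> norm_num
  have hL2 : 2 ≤ L := by
    have : Real.logb 2 4 ≤ Real.logb 2 (4 * d) :=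
      Real.logb_le_logb_of_le (by norm_num) (by norm_num) (by linarith)
    linarith [this, h4eq.ge, h4eq.le]
  have hL4d : L ≤ 4 * d := ES_logb_le_self (by linarith)
  set a := 2 * d * L with hadef
  have ha4 : 4 ≤ a := by nlinarith
  have hat : a < t := hcon
  have h1 : Real.logb 2 (t + 1) ≤ 1 + Real.logb 2 t := by
    have h0 : Real.logb 2 (t + 1) ≤ Real.logb 2 (2 * t) :=
      Real.logb_le_logb_of_le (by norm_num) (by linarith) (by linarith)
    have e : Real.logb 2 (2 * t) = 1 + Real.logb 2 t := by
      rw [Real.logb_mul (by norm_num) (by linarith), Real.logb_self_eq_one] <;> norm_num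
    linarith [e ▸ h0]
  have h2 : Real.logb 2 t ≤ Real.logb 2 a + (t / a - 1) / Real.log 2 := by
    have hta : (0:ℝ) < t / a := div_pos (by linarith) (by linarith)
    have hle := Real.log_le_sub_one_of_pos hta
    have hsplit : Real.log t = Real.log a + Real.log (t / a) := by
      rw [← Real.log_mul (by linarith) (ne_of_gt hta)]
      congr 1
      field_simp
    rw [Real.logb, Real.logb, hsplit, add_div]
    gcongr
  have h3 : d * (1 + Real.logb 2 a) ≤ a := by
    have hmono : Real.logb 2 (2 * a) ≤ Real.logb 2 (16 * d ^ 2) := by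
      apply Real.logb_le_logb_of_le (by norm_num) (by linarith)
      nlinarith
    have e1 : Real.logb 2 (2 * a) = 1 + Real.logb 2 a := by
      rw [Real.logb_mul (by norm_num) (by linarith), Real.logb_self_eq_one] <;> norm_num
    have e2 : Real.logb 2 (16 * d ^ 2) = 2 * L := by
      rw [show (16:ℝ) * d ^ 2 = (4 * d) ^ (2:ℕ) by ring, Real.logb_pow]
      push_cast
      ring
    nlinarith
  have h4 : d * ((t / a - 1) / Real.log 2) ≤ (t - a) / 2 := by
    have e : d * ((t / a - 1) / Real.log 2) = (t - a) / (2 * L * Real.log 2) := by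
      field_simp
      ring
    rw [e, div_le_div_iff₀ (by nlinarith) (by norm_num)]
    nlinarith [mul_le_mul_of_nonneg_left
      (show (2:ℝ) ≤ 2 * L * Real.log 2 by nlinarith)
      (show (0:ℝ) ≤ t - a by linarith)]
  have hfin : t ≤ d * (1 + Real.logb 2 a + (t / a - 1) / Real.log 2) := by
    have hc : Real.logb 2 (t + 1) ≤ 1 + Real.logb 2 a + (t / a - 1) / Real.log 2 := by
      linarith
    nlinarith
  nlinarith

open Finset in
lemma ES_exchange {B : Type*} [Fintype B] {d : ℕ}
    (c : Fin d → B → ℕ) (k : Fin d → ℕ) (l : B → ℕ)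
    (hl : ∀ i, ∑ β, c i β * l β = k i)
    (hmin1 : ∀ l' : B → ℕ, (∀ i, ∑ β, c i β * l' β = k i) →
      ∑ β, l β ≤ ∑ β, l' β)
    (hmin2 : ∀ l' : B → ℕ, (∀ i, ∑ β, c i β * l' β = k i) →
      (∑ β, l' β = ∑ β, l β) →
      ∀ [DecidablePred (fun β => l β ≠ 0)] [DecidablePred (fun β => l' β ≠ 0)],
      (Finset.univ.filter (fun β => l β ≠ 0)).card ≤
        (Finset.univ.filter (fun β => l' β ≠ 0)).card)
    (S₁ S₂ : Finset B) (hdisj : Disjoint S₁ S₂)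
    (hS₁T : ∀ β ∈ S₁, l β ≠ 0) (hS₂T : ∀ β ∈ S₂, l β ≠ 0)
    (hne : S₁.Nonempty) (hcard : S₂.card ≤ S₁.card)
    (hsum : ∀ i, ∑ β ∈ S₁, c i β = ∑ β ∈ S₂, c i β) : False := by
  classical
  obtain ⟨β₀, hβ₀, hminβ₀⟩ := S₁.exists_min_image l hne
  set μ := l β₀ with hμdef
  have hμpos : 1 ≤ μ := Nat.one_le_iff_ne_zero.mpr (hS₁T β₀ hβ₀)
  set l' : B → ℕ := fun β => if β ∈ S₁ then l β - μ else if β ∈ S₂ then l β + μ else l β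
    with hl'def
  have hμle : ∀ β ∈ S₁, μ ≤ l β := hminβ₀
  -- the master identity
  have key : ∀ g : B → ℕ, ∑ β, g β * l' β + μ * ∑ β ∈ S₁, g β =
      (∑ β, g β * l β) + μ * ∑ β ∈ S₂, g β := by
    intro g
    have hsplit : ∀ f : B → ℕ, ∑ β, f β =
        ∑ β ∈ S₁, f β + ∑ β ∈ S₂, f β + ∑ β ∈ (S₁ ∪ S₂)ᶜ, f β := by
      intro f
      rw [← Finset.sum_union hdisj, Finset.sum_add_sum_compl]
    have e1 : ∑ β ∈ S₁, g β * l' β + μ * ∑ β ∈ S₁, g β = ∑ β ∈ S₁, g β * l β := by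
      rw [Finset.mul_sum, ← Finset.sum_add_distrib]
      refine Finset.sum_congr rfl fun β hβ => ?_
      have h1 : l' β = l β - μ := by simp [hl'def, hβ]
      have h2 : μ ≤ l β := hμle β hβ
      rw [h1]
      rw [mul_comm μ (g β), ← Nat.mul_add, Nat.sub_add_cancel h2]
    have e2 : ∑ β ∈ S₂, g β * l' β = ∑ β ∈ S₂, g β * l β + μ * ∑ β ∈ S₂, g β := by
      rw [Finset.mul_sum, ← Finset.sum_add_distrib]
      refine Finset.sum_congr rfl fun β hβ => ?_
      have hβ1 : β ∉ S₁ := fun hmem => (Finset.disjoint_left.mp hdisj hmem) hβ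
      have h1 : l' β = l β + μ := by simp [hl'def, hβ, hβ1]
      rw [h1, mul_comm μ (g β), Nat.mul_add]
    have e3 : ∑ β ∈ (S₁ ∪ S₂)ᶜ, g β * l' β = ∑ β ∈ (S₁ ∪ S₂)ᶜ, g β * l β := by
      refine Finset.sum_congr rfl fun β hβ => ?_
      rw [Finset.mem_compl, Finset.mem_union] at hβ
      push_neg at hβ
      simp [hl'def, hβ.1, hβ.2]
    rw [hsplit (fun β => g β * l' β), hsplit (fun β => g β * l β)]
    linarith [e1, e2, e3]
  -- l' is a solution
  have hsol' : ∀ i, ∑ β, c i β * l' β = k i := by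
    intro i
    have := key (c i)
    rw [hsum i] at this
    have := Nat.add_right_cancel this
    rw [this, hl i]
  -- sum comparison
  have hsum' : ∑ β, l' β + μ * S₁.card = ∑ β, l β + μ * S₂.card := by
    have := key (fun _ => 1)
    simpa using this
  have hle := hmin1 l' hsol'
  have hcards : S₁.card = S₂.card := by
    rcases lt_or_ge S₂.card S₁.card with hlt | hge
    · exfalso
      have : ∑ β, l' β < ∑ β, l β := by nlinarith
      omega
    · omega
  have hsum'' : ∑ β, l' β = ∑ β, l β := by
    rw [hcards] at hsum'
    omega
  -- support strictly decreases
  have hsupp : (Finset.univ.filter (fun β => l' β ≠ 0)) ⊆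
      (Finset.univ.filter (fun β => l β ≠ 0)).erase β₀ := by
    intro β hβ
    rw [Finset.mem_filter] at hβ
    rw [Finset.mem_erase, Finset.mem_filter]
    refine ⟨?_, Finset.mem_univ β, ?_⟩
    · rintro rfl
      apply hβ.2
      simp [hl'def, hβ₀, hμdef]
    · intro h0
      apply hβ.2
      by_cases h1 : β ∈ S₁
      · have := hS₁T β h1
        simp only [hl'def, if_pos h1]
        omega
      · by_cases h2 : β ∈ S₂
        · exact absurd h0 (hS₂T β h2)
        · simp [hl'def, h1, h2, h0]
  have hβ₀mem : β₀ ∈ Finset.univ.filter (fun β => l β ≠ 0) :=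
    Finset.mem_filter.mpr ⟨Finset.mem_univ _, hS₁T β₀ hβ₀⟩
  have h1 := Finset.card_le_card hsupp
  have h2 := Finset.card_erase_of_mem hβ₀mem
  have h3 := hmin2 l' hsol' hsum''
  have h4 : 1 ≤ (Finset.univ.filter (fun β => l β ≠ 0)).card :=
    Finset.card_pos.mpr ⟨β₀, hβ₀mem⟩
  omega

/-- Eisenbrand–Shmonin bound for 0-1 cardinality constraint systems: if a system of
`p+1` linear equations `Σ_{β ∈ B} c_{i,β} · l_β = k_i` (`i = 0,…,p`) with
coefficients `c_{i,β} ∈ {0,1}` and unknowns `l_β ∈ ℕ` indexed by a finite set `B`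
has a solution, then it has a solution in which the number of indices `β` with
`l_β > 0` is at most `2(p+1) · log₂(4(p+1))` — since every element of the integer
cone generated by a set `X ⊆ {0,1}^{p+1}` is an `ℕ`-linear combination of at most
`2(p+1) · log₂(4(p+1))` elements of `X`. -/
theorem eisenbrand_shmonin_sparse_solution {B : Type*} [Fintype B] {p : ℕ}
    (c : Fin (p + 1) → B → ℕ) (hc : ∀ i β, c i β ≤ 1)
    (k : Fin (p + 1) → ℕ)
    (h : ∃ l : B → ℕ, ∀ i, ∑ β, c i β * l β = k i) :
    ∃ l : B → ℕ, (∀ i, ∑ β, c i β * l β = k i) ∧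
      ((Finset.univ.filter (fun β => l β ≠ 0)).card : ℝ) ≤
        2 * (p + 1) * Real.logb 2 (4 * (p + 1)) := by
  classical
  obtain ⟨l₀, hl₀⟩ := h
  -- minimize total sum, then support size
  set N : Set ℕ := {n | ∃ l : B → ℕ, (∀ i, ∑ β, c i β * l β = k i) ∧ ∑ β, l β = n} with hN
  have hNne : N.Nonempty := ⟨_, l₀, hl₀, rfl⟩
  obtain ⟨l₁, hl₁, hsum₁⟩ := Nat.sInf_mem hNne
  set M : Set ℕ := {m | ∃ l : B → ℕ, (∀ i, ∑ β, c i β * l β = k i) ∧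
      (∑ β, l β = sInf N) ∧ (Finset.univ.filter (fun β => l β ≠ 0)).card = m} with hM
  have hMne : M.Nonempty := ⟨_, l₁, hl₁, hsum₁, rfl⟩
  obtain ⟨l, hl, hln, hlt⟩ := Nat.sInf_mem hMne
  have hmin1 : ∀ l' : B → ℕ, (∀ i, ∑ β, c i β * l' β = k i) →
      ∑ β, l β ≤ ∑ β, l' β := by
    intro l' hl'
    rw [hln]
    exact Nat.sInf_le ⟨l', hl', rfl⟩
  have hmin2 : ∀ l' : B → ℕ, (∀ i, ∑ β, c i β * l' β = k i) →
      (∑ β, l' β = ∑ β, l β) →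
      ∀ [DecidablePred (fun β => l β ≠ 0)] [DecidablePred (fun β => l' β ≠ 0)],
      (Finset.univ.filter (fun β => l β ≠ 0)).card ≤
        (Finset.univ.filter (fun β => l' β ≠ 0)).card := by
    intro l' hl' hsum' _ _
    have e1 : (Finset.univ.filter (fun β => l β ≠ 0)).card = sInf M := by
      rw [← hlt]; congr!
    have e2 : sInf M ≤ (Finset.univ.filter (fun β => l' β ≠ 0)).card := by
      apply Nat.sInf_le
      refine ⟨l', hl', by rw [hsum', hln], ?_⟩
      congr!
    rw [e1]; exact e2
  set T := Finset.univ.filter (fun β => l β ≠ 0) with hT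
  set t := T.card with ht
  refine ⟨l, hl, ?_⟩
  -- injectivity of subset sums on powerset of T
  have hinj : ∀ S₁ ∈ T.powerset, ∀ S₂ ∈ T.powerset,
      (∀ i, ∑ β ∈ S₁, c i β = ∑ β ∈ S₂, c i β) → S₁ = S₂ := by
    intro S₁ hS₁ S₂ hS₂ hsums
    rw [Finset.mem_powerset] at hS₁ hS₂
    by_contra hne
    set A := S₁ \ S₂ with hA
    set A' := S₂ \ S₁ with hA'
    have hAB : ∀ i, ∑ β ∈ A, c i β = ∑ β ∈ A', c i β := by
      intro i
      have e1 : ∑ β ∈ S₁ ∩ S₂, c i β + ∑ β ∈ S₁ \ S₂, c i β = ∑ β ∈ S₁, c i β :=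
        Finset.sum_inter_add_sum_sdiff S₁ S₂ (c i)
      have e2 : ∑ β ∈ S₂ ∩ S₁, c i β + ∑ β ∈ S₂ \ S₁, c i β = ∑ β ∈ S₂, c i β :=
        Finset.sum_inter_add_sum_sdiff S₂ S₁ (c i)
      rw [Finset.inter_comm] at e2
      rw [← hA] at e1
      rw [← hA'] at e2
      have := hsums i
      omega
    have hdisj : Disjoint A A' := disjoint_sdiff_sdiff
    have hAT : ∀ β ∈ A, l β ≠ 0 := fun β hβ =>
      (Finset.mem_filter.mp (hS₁ (Finset.mem_sdiff.mp hβ).1)).2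
    have hA'T : ∀ β ∈ A', l β ≠ 0 := fun β hβ =>
      (Finset.mem_filter.mp (hS₂ (Finset.mem_sdiff.mp hβ).1)).2
    have hnotboth : A.Nonempty ∨ A'.Nonempty := by
      by_contra hcon
      push_neg at hcon
      apply hne
      apply Finset.Subset.antisymm
      · exact Finset.sdiff_eq_empty_iff_subset.mp hcon.1
      · exact Finset.sdiff_eq_empty_iff_subset.mp hcon.2
    rcases le_total A'.card A.card with hcc | hcc
    · have hAne : A.Nonempty := by
        rcases hnotboth with h' | h'
        · exact h'
        · exact Finset.card_pos.mp (lt_of_lt_of_le (Finset.card_pos.mpr h') hcc)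
      exact ES_exchange c k l hl hmin1 hmin2 A A' hdisj hAT hA'T hAne hcc hAB
    · have hA'ne : A'.Nonempty := by
        rcases hnotboth with h' | h'
        · exact Finset.card_pos.mp (lt_of_lt_of_le (Finset.card_pos.mpr h') hcc)
        · exact h'
      exact ES_exchange c k l hl hmin1 hmin2 A' A hdisj.symm hA'T hAT hA'ne hcc
        (fun i => (hAB i).symm)
  -- counting: 2^t ≤ (t+1)^(p+1)
  have hcount : 2 ^ t ≤ (t + 1) ^ (p + 1) := by
    set f : Finset B → (Fin (p + 1) → Fin (t + 1)) :=
      fun S i => ⟨min (∑ β ∈ S, c i β) t, by omega⟩ with hf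
    have hsumle : ∀ S ∈ T.powerset, ∀ i, ∑ β ∈ S, c i β ≤ t := by
      intro S hS i
      rw [Finset.mem_powerset] at hS
      calc ∑ β ∈ S, c i β ≤ ∑ β ∈ S, 1 := Finset.sum_le_sum fun β _ => hc i β
        _ = S.card := by simp
        _ ≤ t := Finset.card_le_card hS
    have hfinj : Set.InjOn f T.powerset := by
      intro S₁ hS₁ S₂ hS₂ hfeq
      rw [Finset.mem_coe] at hS₁ hS₂
      apply hinj S₁ hS₁ S₂ hS₂
      intro i
      have := congrFun hfeq i
      rw [hf] at this
      simp only [Fin.mk.injEq] at this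
      rw [min_eq_left (hsumle S₁ hS₁ i), min_eq_left (hsumle S₂ hS₂ i)] at this
      exact this
    have hcard := Finset.card_le_card_of_injOn f (fun _ _ => Finset.mem_univ _) hfinj
    rw [Finset.card_powerset, Finset.card_univ] at hcard
    simpa using hcard
  -- transfer to reals
  have h2t : ((2:ℝ)) ^ t ≤ ((t:ℝ) + 1) ^ (p + 1) := by exact_mod_cast hcount
  have hlogb : (t : ℝ) ≤ ((p:ℝ) + 1) * Real.logb 2 ((t:ℝ) + 1) := by
    have hmono : Real.logb 2 ((2:ℝ) ^ t) ≤ Real.logb 2 (((t:ℝ) + 1) ^ (p + 1)) :=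
      Real.logb_le_logb_of_le (by norm_num) (by positivity) h2t
    rw [Real.logb_pow, Real.logb_pow, Real.logb_self_eq_one (by norm_num : (1:ℝ) < 2)]
      at hmono
    push_cast at hmono ⊢
    linarith
  have := ES_real_bound (d := (p:ℝ) + 1) (by linarith [Nat.cast_nonneg (α := ℝ) p]) (Nat.cast_nonneg t) hlogb
  calc ((Finset.univ.filter (fun β => l β ≠ 0)).card : ℝ) = (t : ℝ) := by rw [← hT, ht]
    _ ≤ 2 * ((p:ℝ) + 1) * Real.logb 2 (4 * ((p:ℝ) + 1)) := this
    _ = 2 * (p + 1) * Real.logb 2 (4 * (p + 1)) := by push_cast; ring_nf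
end

section
/- In the weak direct power of (ℕ, +, ≤) over an infinite index set (functions with finite support), a conjunction of positive constraints that is satisfied by the zero function at some index can be extended: if each formula φ₀ (positives only, satisfied by the all-zeros tuple 0ⁿ in ℕ) and φ₁,...,φ_t (positives plus blocks of negatives, each satisfiable in ℕ, with t finite) holds, then the full conjunction of positives and negatives is satisfiable in the weak power by a finitely supported assignment. -/
/-- In the weak direct power of `(ℕ, +, ≤)` over an infinite index set `I`
(functions `I → ℕ` with finite support, with `+` and `≤` lifted pointwise, a
positive constraint holding iff it holds at every index and a negated one iff it
fails at some index): if the conjunction `φ₀` of the positive constraints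
`P₁,…,P_l` is satisfied by the all-zeros tuple `0ⁿ` in `ℕ`, and each formula `φ_d`
(the positives plus the negatives `¬Q_e` of block `d` of a partition of the negated
constraints into `t` blocks) is satisfiable in `ℕ`, then the full conjunction of
positives and negatives is satisfiable in the weak power by a finitely supported
assignment (placing the solution of `φ_d` at a chosen index `i_d` and the zero
tuple everywhere else). -/
theorem weak_power_sat {I : Type*} [Infinite I] {n l k' t : ℕ}
    (P : Fin l → (Fin n → ℕ) → Prop) (Q : Fin k' → (Fin n → ℕ) → Prop)
    (part : Fin k' → Fin t)
    (h0 : ∀ j : Fin l, P j (fun _ => 0))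
    (hd : ∀ d : Fin t, ∃ x : Fin n → ℕ,
      (∀ j : Fin l, P j x) ∧ ∀ e : Fin k', part e = d → ¬ Q e x) :
    ∃ s : Fin n → (I → ℕ),
      (∀ v : Fin n, (Function.support (s v)).Finite) ∧
      (∀ j : Fin l, ∀ i : I, P j (fun v => s v i)) ∧
      (∀ e : Fin k', ∃ i : I, ¬ Q e (fun v => s v i)) := by
  classical
  choose x hx hnx using hd
  obtain ⟨f, hf⟩ : ∃ f : Fin t → I, Function.Injective f :=
    ⟨fun d => (Infinite.natEmbedding I) d.val,
      fun a b h => Fin.val_injective ((Infinite.natEmbedding I).injective h)⟩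
  refine ⟨fun v i => if h : ∃ d, f d = i then x h.choose v else 0, ?_, ?_, ?_⟩
  · intro v
    apply Set.Finite.subset (Set.finite_range f)
    intro i hi
    simp only [Function.mem_support] at hi
    by_cases h : ∃ d, f d = i
    · exact ⟨h.choose, h.choose_spec⟩
    · simp [h] at hi
  · intro j i
    by_cases h : ∃ d, f d = i
    · simpa [h] using hx h.choose j
    · simpa [h] using h0 j
  · intro e
    refine ⟨f (part e), ?_⟩
    have h : ∃ d, f d = f (part e) := ⟨part e, rfl⟩
    have hc : h.choose = part e := hf h.choose_spec
    simpa [h, hc] using hnx (part e) e rfl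
end
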